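/- arXiv:2605.04689 — 2 statements merged into one kernel-verified Lean document; each statement's English description precedes it below -/
import Mathlib

section
/- For any base B, atom a, and finite sets of atoms P and Q, the following are equivalent: (1) P ∪ Q ⊢_B a; (2) for all bases C ⊇ B, if Q ⊢_C p for all p ∈ P, then Q ⊢_C a; (3) Q ⊢_{B'} a, where B' = B ∪ {(⇒ p) | p ∈ P} is B extended with axiom rules for every atom in P (atomic deduction theorem). -/
/-- An atomic rule `((P₁ ⇒ a₁), …, (Pₙ ⇒ aₙ) ⇒ b)`: the premises are pairs
of a finite set of atoms and an atom, the conclusion is an atom. -/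
structure AtomicRule where
  premises : List (Finset ℕ × ℕ)
  concl : ℕ

/-- A base is a set of atomic rules. -/
abbrev Base := Set AtomicRule

/-- Atomic derivability `P ⊢_B a`. -/
inductive Derives (B : Base) : Finset ℕ → ℕ → Prop
  | ref {P : Finset ℕ} {a : ℕ} (h : a ∈ P) : Derives B P a
  | app {r : AtomicRule} (hr : r ∈ B) {Q : Finset ℕ}
      (h : ∀ pr ∈ r.premises, Derives B (Q ∪ pr.1) pr.2) :
      Derives B Q r.concl

theorem Derives.weaken {B : Base} {Q Q' : Finset ℕ} {a : ℕ}
    (h : Derives B Q a) (hQ : Q ⊆ Q') : Derives B Q' a := by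
  induction h generalizing Q' with
  | ref h => exact .ref (hQ h)
  | app hr h ih =>
      exact .app hr fun pr hpr =>
        ih pr hpr (Finset.union_subset_union_left hQ)

theorem Derives.cut {B : Base} {R : Finset ℕ} {a : ℕ}
    (h : Derives B R a) {C : Base} (hBC : B ⊆ C) {Q : Finset ℕ}
    (hR : ∀ p ∈ R, Derives C Q p) : Derives C Q a := by
  induction h generalizing Q with
  | ref h => exact hR _ h
  | app hr h ih =>
      refine .app (hBC hr) fun pr hpr => ih pr hpr ?_
      intro p hp
      rcases Finset.mem_union.1 hp with hp | hp
      · exact (hR p hp).weaken Finset.subset_union_left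
      · exact .ref (Finset.mem_union_right _ hp)

theorem Derives.deduct {B : Base} {P Q : Finset ℕ} {a : ℕ}
    (h : Derives (B ∪ {r : AtomicRule | ∃ p ∈ P, r = ⟨[], p⟩}) Q a) :
    Derives B (P ∪ Q) a := by
  induction h with
  | ref h => exact .ref (Finset.mem_union_right _ h)
  | app hr h ih =>
      rcases hr with hr | ⟨p, hp, rfl⟩
      · refine .app hr fun pr hpr => ?_
        have := ih pr hpr
        rwa [← Finset.union_assoc] at this
      · exact .ref (Finset.mem_union_left _ hp)

/-- Atomic deduction theorem: `P ∪ Q ⊢_B a` iff for all `C ⊇ B`, derivability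
of all of `P` from `Q` in `C` implies `Q ⊢_C a`, iff `Q ⊢_{B'} a` where `B'`
extends `B` with axiom rules `(⇒ p)` for every `p ∈ P`. -/
theorem atomic_deduction (B : Base) (P Q : Finset ℕ) (a : ℕ) :
    [ Derives B (P ∪ Q) a,
      ∀ C : Base, B ⊆ C → (∀ p ∈ P, Derives C Q p) → Derives C Q a,
      Derives (B ∪ {r : AtomicRule | ∃ p ∈ P, r = ⟨[], p⟩}) Q a ].TFAE := by
  tfae_have 1 → 2 := by
    intro h C hBC hP
    refine h.cut hBC fun p hp => ?_
    rcases Finset.mem_union.1 hp with hp | hp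
    · exact hP p hp
    · exact .ref hp
  tfae_have 2 → 3 := by
    intro h
    refine h _ Set.subset_union_left fun p hp => ?_
    exact .app (r := ⟨[], p⟩) (Or.inr ⟨p, hp, rfl⟩) (by simp)
  tfae_have 3 → 1 := Derives.deduct
  tfae_finish
end

section
/- Let H be a complete Heyting algebra, S ⊆ H a set of elements, and define J(a) = ⋀_{b ∈ S} ((a → b) → b). Then J is a nucleus on H, and every element b ∈ S is a fixpoint of J: J(b) = b. -/
/-- For `S ⊆ H`, the map `J a = ⨅ b ∈ S, (a ⇨ b) ⇨ b` is a nucleus on the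
complete Heyting algebra `H`, and every element of `S` is a fixpoint of `J`. -/
theorem J_nucleus_and_fixes (H : Type*) [Order.Frame H] (S : Set H)
    (J : H → H) (hJ : ∀ a : H, J a = ⨅ b ∈ S, (a ⇨ b) ⇨ b) :
    (∀ a b : H, a ≤ b → J a ≤ J b) ∧
    (∀ a : H, a ≤ J a) ∧
    (∀ a : H, J (J a) = J a) ∧
    (∀ a b : H, J (a ⊓ b) = J a ⊓ J b) ∧
    (∀ b ∈ S, J b = b) := by
  have hle : ∀ a : H, ∀ b ∈ S, J a ≤ (a ⇨ b) ⇨ b := by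
    intro a b hb; rw [hJ]; exact iInf₂_le b hb
  have hmono : ∀ a b : H, a ≤ b → J a ≤ J b := by
    intro a b hab
    rw [hJ b]
    refine le_iInf₂ fun c hc => (hle a c hc).trans ?_
    exact himp_le_himp_right (himp_le_himp_right hab)
  have hincr : ∀ a : H, a ≤ J a := by
    intro a
    rw [hJ]
    refine le_iInf₂ fun c hc => ?_
    rw [le_himp_iff]
    exact inf_himp_le
  have hidem : ∀ a : H, J (J a) = J a := by
    intro a
    refine le_antisymm ?_ (hincr _)
    have h : ∀ c ∈ S, J (J a) ≤ (a ⇨ c) ⇨ c := by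
      intro c hc
      refine (hle (J a) c hc).trans (himp_le_himp_right ?_)
      rw [le_himp_iff]
      exact (inf_le_inf_left _ (hle a c hc)).trans inf_himp_le
    exact (le_iInf₂ h).trans_eq (hJ a).symm
  have hmeet : ∀ a b : H, J (a ⊓ b) = J a ⊓ J b := by
    intro a b
    refine le_antisymm
      (le_inf (hmono _ _ inf_le_left) (hmono _ _ inf_le_right)) ?_
    have h : ∀ c ∈ S, J a ⊓ J b ≤ ((a ⊓ b) ⇨ c) ⇨ c := by
      intro c hc
      rw [le_himp_iff]
      have step1 : J a ⊓ ((a ⊓ b) ⇨ c) ≤ b ⇨ c := by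
        rw [le_himp_iff]
        have h1 : ((a ⊓ b) ⇨ c) ⊓ b ≤ a ⇨ c := by
          rw [le_himp_iff]
          calc ((a ⊓ b) ⇨ c) ⊓ b ⊓ a
              = ((a ⊓ b) ⇨ c) ⊓ (a ⊓ b) := by
                rw [inf_assoc, inf_comm b a]
            _ ≤ c := himp_inf_le
        calc J a ⊓ ((a ⊓ b) ⇨ c) ⊓ b
            = J a ⊓ (((a ⊓ b) ⇨ c) ⊓ b) := inf_assoc _ _ _
          _ ≤ J a ⊓ (a ⇨ c) := inf_le_inf_left _ h1
          _ ≤ ((a ⇨ c) ⇨ c) ⊓ (a ⇨ c) := inf_le_inf_right _ (hle a c hc)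
          _ ≤ c := himp_inf_le
      calc J a ⊓ J b ⊓ ((a ⊓ b) ⇨ c)
          = J b ⊓ (J a ⊓ ((a ⊓ b) ⇨ c)) := by
            rw [inf_comm (J a) (J b), inf_assoc]
        _ ≤ J b ⊓ (b ⇨ c) := inf_le_inf_left _ step1
        _ ≤ ((b ⇨ c) ⇨ c) ⊓ (b ⇨ c) := inf_le_inf_right _ (hle b c hc)
        _ ≤ c := himp_inf_le
    exact (le_iInf₂ h).trans_eq (hJ (a ⊓ b)).symm
  refine ⟨hmono, hincr, hidem, hmeet, fun b hb => ?_⟩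
  refine le_antisymm ?_ (hincr b)
  have := hle b b hb
  rwa [himp_self, top_himp] at this
end
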